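/- arXiv:2311.16049 — 6 statements merged into one kernel-verified Lean document; each statement's English description precedes it below -/
import Mathlib

section
/- If the initial data are nonnegative, i.e. S0 ≥ 0, V0 ≥ 0 and e0, a0, i0 ∈ L¹(ℝ≥0; ℝ≥0), then the unique continuous solution (β, α, ι) of the Volterra system satisfies β(t) ≥ 0, α(t) ≥ 0 and ι(t) ≥ 0 for all t ≥ 0. -/
/-!
Since `S[β]` and `V[β]` are nonnegative whatever the sign of `β`, the incidence
`β (S[β] + (1 - ε) V[β])` is `β` times a nonnegative coefficient that is bounded on compact
time intervals. So `x = (β, α, ι)` satisfies a linear Volterra inequality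
`x u ≥ ∫₀ᵘ A(u, s) x s ds` with a nonnegative bounded kernel `A`, the initial-data integrals
being nonnegative. On `[0, T]` the sum `n` of the negative parts of the components of `x` then
satisfies `n u ≤ K ∫₀ᵘ n`, and Grönwall's inequality forces `n = 0`.
-/

open MeasureTheory Filter

noncomputable section

/-- Survival kernel of the exposed class: `π_E(θ) = exp(−∫₀^θ (k(τ)+μ) dτ)`. -/
def piE (μ : ℝ) (k : ℝ → ℝ) (θ : ℝ) : ℝ :=
  Real.exp (-(∫ τ in (0:ℝ)..θ, (k τ + μ)))

/-- Survival kernel of the asymptomatic class: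
`π_A(θ) = exp(−∫₀^θ (γ_A ξ + χ(1−ξ) + μ) dτ)`. -/
def piA (μ : ℝ) (γA ξ χ : ℝ → ℝ) (θ : ℝ) : ℝ :=
  Real.exp (-(∫ τ in (0:ℝ)..θ, (γA τ * ξ τ + χ τ * (1 - ξ τ) + μ)))

/-- Survival kernel of the symptomatic class: `π_I(θ) = exp(−∫₀^θ (γ_I(τ)+μ) dτ)`. -/
def piI (μ : ℝ) (γI : ℝ → ℝ) (θ : ℝ) : ℝ :=
  Real.exp (-(∫ τ in (0:ℝ)..θ, (γI τ + μ)))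

/-- An essentially bounded measurable nonnegative coefficient on `ℝ≥0`
(element of `L∞(ℝ≥0; ℝ≥0)`). -/
def CoeffBM (f : ℝ → ℝ) : Prop :=
  Measurable f ∧ (∃ C : ℝ, ∀ θ, 0 ≤ θ → f θ ≤ C) ∧ (∀ θ, 0 ≤ θ → 0 ≤ f θ)

/-- A measurable coefficient with values in `[0,1]` on `ℝ≥0`
(element of `L∞(ℝ≥0; [0,1])`). -/
def FracBM (f : ℝ → ℝ) : Prop :=
  Measurable f ∧ ∀ θ, 0 ≤ θ → f θ ∈ Set.Icc (0:ℝ) 1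

/-- A bounded continuous nonnegative coefficient on `ℝ≥0`. -/
def CoeffBC (f : ℝ → ℝ) : Prop :=
  Continuous f ∧ (∃ C : ℝ, ∀ θ, 0 ≤ θ → f θ ≤ C) ∧ (∀ θ, 0 ≤ θ → 0 ≤ f θ)

/-- A continuous coefficient with values in `[0,1]` on `ℝ≥0`. -/
def FracBC (f : ℝ → ℝ) : Prop :=
  Continuous f ∧ ∀ θ, 0 ≤ θ → f θ ∈ Set.Icc (0:ℝ) 1

/-- Variation-of-constants expression `S[b]` for the susceptible compartment. -/
def Ssol (μ N0 p S0 : ℝ) (b : ℝ → ℝ) (t : ℝ) : ℝ :=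
  S0 * Real.exp (-(∫ s in (0:ℝ)..t, (p + b s + μ))) +
    μ * N0 * ∫ s in (0:ℝ)..t, Real.exp (-(∫ τ in s..t, (p + b τ + μ)))

/-- Variation-of-constants expression `V[b]` for the vaccinated compartment. -/
def Vsol (μ N0 p ζ ε S0 V0 : ℝ) (b : ℝ → ℝ) (t : ℝ) : ℝ :=
  V0 * Real.exp (-(∫ s in (0:ℝ)..t, (ζ * ε + b s * (1 - ε) + μ))) +
    p * ∫ s in (0:ℝ)..t, Ssol μ N0 p S0 b s *
      Real.exp (-(∫ τ in s..t, (ζ * ε + b τ * (1 - ε) + μ)))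

/-- The boundary value `ε̃(t) = β(t)·(S(t) + (1−ε)V(t))`. -/
def epsTilde (μ N0 p ζ ε S0 V0 : ℝ) (β : ℝ → ℝ) (t : ℝ) : ℝ :=
  β t * (Ssol μ N0 p S0 β t + (1 - ε) * Vsol μ N0 p ζ ε S0 V0 β t)

/-- Age density along characteristics: initial datum `f0` transported below the
diagonal, boundary datum `bdry` transported above the diagonal, with survival
kernel `π`. -/
def dens (π f0 bdry : ℝ → ℝ) (t θ : ℝ) : ℝ :=
  if t < θ then f0 (θ - t) * π θ / π (θ - t) else bdry (t - θ) * π θ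

/-- The Volterra integral system for the triple `(β, α, ι)` of boundary values. -/
def VolterraSystem (μ N0 p ζ ε S0 V0 : ℝ)
    (βA βI k χ γA γI q ξ e0 a0 i0 β α ι : ℝ → ℝ) : Prop :=
  ContinuousOn β (Set.Ici 0) ∧ ContinuousOn α (Set.Ici 0) ∧ ContinuousOn ι (Set.Ici 0) ∧
    ∀ t, 0 ≤ t →
      β t = (∫ s in (0:ℝ)..t,
          (βA (t - s) * α s * piA μ γA ξ χ (t - s) +
            βI (t - s) * ι s * piI μ γI (t - s))) +
        (∫ s in Set.Ioi (0:ℝ),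
          (βA (t + s) * a0 s * piA μ γA ξ χ (t + s) / piA μ γA ξ χ s +
            βI (t + s) * i0 s * piI μ γI (t + s) / piI μ γI s)) ∧
      α t = (∫ s in (0:ℝ)..t,
          k (t - s) * q (t - s) * β s *
            (Ssol μ N0 p S0 β s + (1 - ε) * Vsol μ N0 p ζ ε S0 V0 β s) * piE μ k (t - s)) +
        (∫ s in Set.Ioi (0:ℝ),
          k (t + s) * q (t + s) * e0 s * piE μ k (t + s) / piE μ k s) ∧
      ι t = (∫ s in (0:ℝ)..t,
          (k (t - s) * (1 - q (t - s)) * β s *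
              (Ssol μ N0 p S0 β s + (1 - ε) * Vsol μ N0 p ζ ε S0 V0 β s) * piE μ k (t - s) +
            χ (t - s) * (1 - ξ (t - s)) * α s * piA μ γA ξ χ (t - s))) +
        (∫ s in Set.Ioi (0:ℝ),
          (k (t + s) * (1 - q (t + s)) * e0 s * piE μ k (t + s) / piE μ k s +
            χ (t + s) * (1 - ξ (t + s)) * a0 s * piA μ γA ξ χ (t + s) / piA μ γA ξ χ s))

/-- `R_A = (∫₀^∞ k q π_E)·(∫₀^∞ β_A π_A)`. -/
def RAdef (μ : ℝ) (βA k q γA ξ χ : ℝ → ℝ) : ℝ :=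
  (∫ s in Set.Ioi (0:ℝ), k s * q s * piE μ k s) *
    (∫ s in Set.Ioi (0:ℝ), βA s * piA μ γA ξ χ s)

/-- `R_I = (∫₀^∞ k(1−q)π_E + (∫₀^∞ k q π_E)·(∫₀^∞ χ(1−ξ)π_A))·(∫₀^∞ β_I π_I)`. -/
def RIdef (μ : ℝ) (βI k q χ ξ γA γI : ℝ → ℝ) : ℝ :=
  ((∫ s in Set.Ioi (0:ℝ), k s * (1 - q s) * piE μ k s) +
      (∫ s in Set.Ioi (0:ℝ), k s * q s * piE μ k s) *
        (∫ s in Set.Ioi (0:ℝ), χ s * (1 - ξ s) * piA μ γA ξ χ s)) *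
    (∫ s in Set.Ioi (0:ℝ), βI s * piI μ γI s)

/-- The basic reproduction number `R₀`. -/
def R0def (μ N0 p ζ ε : ℝ) (βA βI k χ γA γI q ξ : ℝ → ℝ) : ℝ :=
  (μ * N0 / (p + μ)) * (1 + p * (1 - ε) / (ζ * ε + μ)) *
    (RAdef μ βA k q γA ξ χ + RIdef μ βI k q χ ξ γA γI)

/-- A steady state of the age-structured SVEAIR problem. -/
def SteadyState (μ N0 p ζ ε : ℝ) (βA βI k χ γA γI q ξ : ℝ → ℝ)
    (Sst Vst βst εst αst ιst : ℝ) (est ast ist : ℝ → ℝ) : Prop :=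
  0 ≤ Sst ∧ 0 ≤ Vst ∧ 0 ≤ βst ∧ 0 ≤ εst ∧ 0 ≤ αst ∧ 0 ≤ ιst ∧
    (∀ θ, 0 ≤ θ → 0 ≤ est θ) ∧ (∀ θ, 0 ≤ θ → 0 ≤ ast θ) ∧ (∀ θ, 0 ≤ θ → 0 ≤ ist θ) ∧
    Sst = μ * N0 / (p + βst + μ) ∧
    Vst = p * Sst / (ζ * ε + βst * (1 - ε) + μ) ∧
    (∀ θ, 0 ≤ θ → est θ = εst * piE μ k θ) ∧
    (∀ θ, 0 ≤ θ → ast θ = αst * piA μ γA ξ χ θ) ∧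
    (∀ θ, 0 ≤ θ → ist θ = ιst * piI μ γI θ) ∧
    εst = βst * (Sst + (1 - ε) * Vst) ∧
    αst = (∫ θ in Set.Ioi (0:ℝ), k θ * q θ * est θ) ∧
    ιst = (∫ θ in Set.Ioi (0:ℝ), (k θ * (1 - q θ) * est θ + χ θ * (1 - ξ θ) * ast θ)) ∧
    βst = (∫ θ in Set.Ioi (0:ℝ), (βA θ * ast θ + βI θ * ist θ))

/-- The scalar function `g` whose fixed points characterize steady states. -/
def gfun (μ N0 p ζ ε RA RI β : ℝ) : ℝ :=
  (μ * N0 / (p + β + μ)) * (1 + p * (1 - ε) / (ζ * ε + β * (1 - ε) + μ)) * (RA + RI)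

/-- The Lyapunov weight `f_I`. -/
def fIfun (μ M : ℝ) (βI γI : ℝ → ℝ) (θ : ℝ) : ℝ :=
  M * ∫ s in Set.Ioi θ, βI s * Real.exp (-(∫ τ in θ..s, (γI τ + μ)))

/-- The Lyapunov weight `f_A`. -/
def fAfun (μ M : ℝ) (βA βI γA γI ξ χ : ℝ → ℝ) (θ : ℝ) : ℝ :=
  M * (∫ s in Set.Ioi θ,
      βA s * Real.exp (-(∫ τ in θ..s, (γA τ * ξ τ + χ τ * (1 - ξ τ) + μ)))) +
    fIfun μ M βI γI 0 * ∫ s in Set.Ioi θ,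
      χ s * (1 - ξ s) * Real.exp (-(∫ τ in θ..s, (γA τ * ξ τ + χ τ * (1 - ξ τ) + μ)))

/-- The Lyapunov weight `f_E`. -/
def fEfun (μ M : ℝ) (βA βI k q γA γI ξ χ : ℝ → ℝ) (θ : ℝ) : ℝ :=
  fAfun μ M βA βI γA γI ξ χ 0 *
      (∫ s in Set.Ioi θ, k s * q s * Real.exp (-(∫ τ in θ..s, (k τ + μ)))) +
    fIfun μ M βI γI 0 *
      ∫ s in Set.Ioi θ, k s * (1 - q s) * Real.exp (-(∫ τ in θ..s, (k τ + μ)))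

open Set Matrix

lemma eqOn_zero_of_le_mul_integral {n : ℝ → ℝ} {K a b : ℝ}
    (hn : ContinuousOn n (Icc a b)) (hn0 : ∀ t ∈ Icc a b, 0 ≤ n t)
    (h : ∀ t ∈ Icc a b, n t ≤ K * ∫ s in a..t, n s) : EqOn n 0 (Icc a b) := by
  have hderiv : ∀ t ∈ Icc a b,
      HasDerivWithinAt (fun t => ∫ s in a..t, n s) (n t) (Icc a b) t := by
    intro t ht
    have : Fact (t ∈ Icc a b) := ⟨ht⟩
    exact intervalIntegral.integral_hasDerivWithinAt_right
      ((hn.mono (Icc_subset_Icc_right ht.2)).intervalIntegrable_of_Icc ht.1)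
      (hn.stronglyMeasurableAtFilter_nhdsWithin measurableSet_Icc t) (hn t ht)
  have hprim_zero := eq_zero_of_abs_deriv_le_mul_abs_self_of_eq_zero_right
    (fun t ht => (hderiv t ht).continuousWithinAt)
    (fun t ht => (hderiv t (Ico_subset_Icc_self ht)).mono_of_mem_nhdsWithin
      (Icc_mem_nhdsGE_of_mem ht))
    intervalIntegral.integral_same fun t ht => by
      rw [Real.norm_of_nonneg (hn0 t (Ico_subset_Icc_self ht)), Real.norm_of_nonneg
        (intervalIntegral.integral_nonneg ht.1 fun s hs => hn0 s ⟨hs.1, hs.2.trans ht.2.le⟩)]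
      exact h t (Ico_subset_Icc_self ht)
  intro t ht
  exact le_antisymm (by simpa [hprim_zero t ht] using h t ht) (hn0 t ht)

/-- No integrability of `f` is assumed: otherwise its integral is the junk value `0`. -/
lemma neg_integral_le_integral_of_neg_le {f g : ℝ → ℝ} {a b : ℝ} (hab : a ≤ b)
    (hg : IntervalIntegrable g volume a b) (hg0 : ∀ s ∈ Icc a b, 0 ≤ g s)
    (h : ∀ s ∈ Icc a b, -f s ≤ g s) : -∫ s in a..b, f s ≤ ∫ s in a..b, g s := by
  by_cases hf : IntervalIntegrable f volume a b
  · rw [← intervalIntegral.integral_neg]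
    exact intervalIntegral.integral_mono_on hab hf.neg hg h
  · rw [intervalIntegral.integral_undef hf, neg_zero]
    exact intervalIntegral.integral_nonneg hab hg0

theorem nonneg_of_integral_mulVec_le {m : Type*} [Fintype m] {x : ℝ → m → ℝ}
    {A : ℝ → ℝ → Matrix m m ℝ} {C a b : ℝ} (hC : 0 ≤ C) (hx : ContinuousOn x (Icc a b))
    (hA : ∀ u ∈ Icc a b, ∀ s ∈ Icc a u, ∀ i j, A u s i j ∈ Icc 0 C)
    (hle : ∀ u ∈ Icc a b, ∀ i, ∫ s in a..u, (A u s *ᵥ x s) i ≤ x u i) :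
    ∀ t ∈ Icc a b, 0 ≤ x t := by
  set n : ℝ → ℝ := fun s => ∑ i, (x s i)⁻
  have hn : ContinuousOn n (Icc a b) := by
    refine continuousOn_finsetSum _ fun i _ => ?_
    simp only [negPart_def]
    exact ((continuous_apply i).comp_continuousOn hx).neg.sup continuousOn_const
  have hn0 : ∀ s, 0 ≤ n s := fun s => Finset.sum_nonneg fun i _ => negPart_nonneg _
  have hxn : ∀ s i, -x s i ≤ n s := fun s i => (neg_le_negPart _).trans
    (Finset.single_le_sum (fun j _ => negPart_nonneg (x s j)) (Finset.mem_univ i))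
  set K : ℝ := Fintype.card m * C
  have hK : 0 ≤ K := by positivity
  have hrow : ∀ u ∈ Icc a b, ∀ i, -x u i ≤ K * ∫ s in a..u, n s := by
    intro u hu i
    have hnu : IntervalIntegrable n volume a u :=
      (hn.mono (Icc_subset_Icc_right hu.2)).intervalIntegrable_of_Icc hu.1
    have hkernel : ∀ s ∈ Icc a u, -(A u s *ᵥ x s) i ≤ K * n s := by
      intro s hs
      calc -(A u s *ᵥ x s) i = ∑ j, A u s i j * -x s j := by
            simp [mulVec, dotProduct]
        _ ≤ ∑ _j : m, C * n s := Finset.sum_le_sum fun j _ =>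
            (mul_le_mul_of_nonneg_left (hxn s j) (hA u hu s hs i j).1).trans
              (mul_le_mul_of_nonneg_right (hA u hu s hs i j).2 (hn0 s))
        _ = K * n s := by simp [K, mul_assoc]
    have := neg_integral_le_integral_of_neg_le hu.1 (hnu.const_mul K)
      (fun s _ => mul_nonneg hK (hn0 s)) hkernel
    rw [intervalIntegral.integral_const_mul] at this
    linarith [hle u hu i]
  have hgrowth : ∀ u ∈ Icc a b, n u ≤ (Fintype.card m * K) * ∫ s in a..u, n s := by
    intro u hu
    have hI : 0 ≤ ∫ s in a..u, n s := intervalIntegral.integral_nonneg hu.1 fun s _ => hn0 s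
    calc n u ≤ ∑ _i : m, K * ∫ s in a..u, n s := Finset.sum_le_sum fun i _ => by
          rw [negPart_def]; exact max_le (hrow u hu i) (by positivity)
      _ = _ := by simp [mul_assoc]
  intro t ht i
  have hzero : n t = 0 := eqOn_zero_of_le_mul_integral hn (fun s _ => hn0 s) hgrowth ht
  simpa [hzero] using hxn t i

lemma continuousOn_primitive_of_continuousOn {f : ℝ → ℝ} {a b : ℝ}
    (hf : ContinuousOn f (Icc a b)) :
    ContinuousOn (fun t => ∫ τ in a..t, f τ) (Icc a b) :=
  (intervalIntegral.continuousOn_primitive hf.integrableOn_Icc).congr fun _ ht =>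
    intervalIntegral.integral_of_le ht.1

def variationOfConstants (c : ℝ) (f g : ℝ → ℝ) (t : ℝ) : ℝ :=
  c * Real.exp (-∫ τ in (0:ℝ)..t, f τ) + ∫ r in (0:ℝ)..t, g r * Real.exp (-∫ τ in r..t, f τ)

lemma variationOfConstants_nonneg {c t : ℝ} {f g : ℝ → ℝ} (hc : 0 ≤ c) (ht : 0 ≤ t)
    (hg : ∀ r ∈ Icc 0 t, 0 ≤ g r) : 0 ≤ variationOfConstants c f g t := by
  unfold variationOfConstants
  have : 0 ≤ ∫ r in (0:ℝ)..t, g r * Real.exp (-∫ τ in r..t, f τ) :=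
    intervalIntegral.integral_nonneg ht fun r hr => mul_nonneg (hg r hr) (Real.exp_pos _).le
  positivity

lemma continuousOn_variationOfConstants {c T : ℝ} {f g : ℝ → ℝ}
    (hf : ContinuousOn f (Icc 0 T)) (hg : ContinuousOn g (Icc 0 T)) :
    ContinuousOn (variationOfConstants c f g) (Icc 0 T) := by
  have hF := continuousOn_primitive_of_continuousOn hf
  have hG := continuousOn_primitive_of_continuousOn
    (hg.mul (Real.continuous_exp.comp_continuousOn hF))
  refine ((Real.continuous_exp.comp_continuousOn hF.neg).mul
    ((continuousOn_const (c := c)).add hG)).congr fun t ht => ?_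
  have hfactor : ∀ r ∈ uIcc 0 t, g r * Real.exp (-∫ τ in r..t, f τ) =
      Real.exp (-∫ τ in (0:ℝ)..t, f τ) * (g r * Real.exp (∫ τ in (0:ℝ)..r, f τ)) := by
    intro r hr
    rw [uIcc_of_le ht.1] at hr
    rw [← intervalIntegral.integral_interval_sub_left
      ((hf.mono (Icc_subset_Icc_right ht.2)).intervalIntegrable_of_Icc ht.1)
      ((hf.mono (Icc_subset_Icc_right (hr.2.trans ht.2))).intervalIntegrable_of_Icc hr.1),
      neg_sub, Real.exp_sub, Real.exp_neg]
    ring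
  simp only [variationOfConstants, Function.comp_apply, Pi.add_apply, Pi.mul_apply, Pi.neg_apply]
  rw [intervalIntegral.integral_congr hfactor, intervalIntegral.integral_const_mul]
  ring

lemma Ssol_eq_variationOfConstants (μ N0 p S0 : ℝ) (β : ℝ → ℝ) :
    Ssol μ N0 p S0 β = variationOfConstants S0 (fun τ => p + β τ + μ) (fun _ => μ * N0) := by
  funext t
  simp only [Ssol, variationOfConstants, intervalIntegral.integral_const_mul]

lemma Vsol_eq_variationOfConstants (μ N0 p ζ ε S0 V0 : ℝ) (β : ℝ → ℝ) :
    Vsol μ N0 p ζ ε S0 V0 β = variationOfConstants V0 (fun τ => ζ * ε + β τ * (1 - ε) + μ)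
      (fun r => p * Ssol μ N0 p S0 β r) := by
  funext t
  simp only [Vsol, variationOfConstants, mul_assoc, intervalIntegral.integral_const_mul]

lemma mul_mem_Icc_zero {a b A B : ℝ} (ha : a ∈ Icc 0 A) (hb : b ∈ Icc 0 B) :
    a * b ∈ Icc 0 (A * B) :=
  ⟨mul_nonneg ha.1 hb.1, mul_le_mul ha.2 hb.2 hb.1 (ha.1.trans ha.2)⟩

lemma CoeffBM.exists_mem_Icc {f : ℝ → ℝ} (hf : CoeffBM f) :
    ∃ C, 0 ≤ C ∧ ∀ θ, 0 ≤ θ → f θ ∈ Icc 0 C :=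
  let ⟨_, ⟨C, hC⟩, hf0⟩ := hf
  ⟨C, (hf0 0 le_rfl).trans (hC 0 le_rfl), fun θ hθ => ⟨hf0 θ hθ, hC θ hθ⟩⟩

lemma exp_neg_integral_mem_Icc {r : ℝ → ℝ} {θ : ℝ} (hθ : 0 ≤ θ)
    (hr : ∀ τ, 0 ≤ τ → 0 ≤ r τ) : Real.exp (-∫ τ in (0:ℝ)..θ, r τ) ∈ Icc 0 1 :=
  ⟨(Real.exp_pos _).le, Real.exp_le_one_iff.2 <| neg_nonpos.2 <|
    intervalIntegral.integral_nonneg hθ fun τ hτ => hr τ hτ.1⟩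

section SurvivalKernels

variable {μ : ℝ} {θ : ℝ}

lemma piE_mem_Icc {k : ℝ → ℝ} (hμ : 0 ≤ μ) (hk : ∀ τ, 0 ≤ τ → 0 ≤ k τ) (hθ : 0 ≤ θ) :
    piE μ k θ ∈ Icc 0 1 :=
  exp_neg_integral_mem_Icc hθ fun τ hτ => add_nonneg (hk τ hτ) hμ

lemma piA_mem_Icc {γA ξ χ : ℝ → ℝ} (hμ : 0 ≤ μ) (hγA : ∀ τ, 0 ≤ τ → 0 ≤ γA τ)
    (hχ : ∀ τ, 0 ≤ τ → 0 ≤ χ τ) (hξ : FracBM ξ) (hθ : 0 ≤ θ) :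
    piA μ γA ξ χ θ ∈ Icc 0 1 :=
  exp_neg_integral_mem_Icc hθ fun τ hτ => add_nonneg (add_nonneg
    (mul_nonneg (hγA τ hτ) (hξ.2 τ hτ).1) (mul_nonneg (hχ τ hτ) (sub_nonneg.2 (hξ.2 τ hτ).2))) hμ

lemma piI_mem_Icc {γI : ℝ → ℝ} (hμ : 0 ≤ μ) (hγI : ∀ τ, 0 ≤ τ → 0 ≤ γI τ) (hθ : 0 ≤ θ) :
    piI μ γI θ ∈ Icc 0 1 :=
  exp_neg_integral_mem_Icc hθ fun τ hτ => add_nonneg (hγI τ hτ) hμ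

end SurvivalKernels

lemma ae_nonneg_transport {c f0 π : ℝ → ℝ} {u : ℝ} (hu : 0 ≤ u)
    (hc : ∀ θ, 0 ≤ θ → 0 ≤ c θ) (hf0 : 0 ≤ᵐ[volume.restrict (Ioi 0)] f0)
    (hπ : ∀ θ, 0 < π θ) :
    ∀ᵐ s ∂volume.restrict (Ioi 0), 0 ≤ c (u + s) * f0 s * π (u + s) / π s := by
  filter_upwards [hf0, ae_restrict_mem measurableSet_Ioi] with s hs0 hs
  have hus : 0 ≤ u + s := add_nonneg hu (le_of_lt hs)
  exact div_nonneg (mul_nonneg (mul_nonneg (hc _ hus) hs0) (hπ _).le) (hπ _).le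

def effSusceptible (μ N0 p ζ ε S0 V0 : ℝ) (β : ℝ → ℝ) (t : ℝ) : ℝ :=
  Ssol μ N0 p S0 β t + (1 - ε) * Vsol μ N0 p ζ ε S0 V0 β t

section EffSusceptible

variable {μ N0 p ζ ε S0 V0 : ℝ} {β : ℝ → ℝ}

lemma effSusceptible_nonneg (hμ : 0 ≤ μ) (hN0 : 0 ≤ N0) (hp : 0 ≤ p) (hε : ε ≤ 1)
    (hS0 : 0 ≤ S0) (hV0 : 0 ≤ V0) {t : ℝ} (ht : 0 ≤ t) :
    0 ≤ effSusceptible μ N0 p ζ ε S0 V0 β t := by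
  have hS : ∀ s, 0 ≤ s → 0 ≤ Ssol μ N0 p S0 β s := fun s hs => by
    rw [Ssol_eq_variationOfConstants]
    exact variationOfConstants_nonneg hS0 hs fun _ _ => mul_nonneg hμ hN0
  have hV : 0 ≤ Vsol μ N0 p ζ ε S0 V0 β t := by
    rw [Vsol_eq_variationOfConstants]
    exact variationOfConstants_nonneg hV0 ht fun r hr => mul_nonneg hp (hS r hr.1)
  exact add_nonneg (hS t ht) (mul_nonneg (sub_nonneg.2 hε) hV)

lemma continuousOn_effSusceptible {T : ℝ} (hβ : ContinuousOn β (Icc 0 T)) :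
    ContinuousOn (effSusceptible μ N0 p ζ ε S0 V0 β) (Icc 0 T) := by
  have hS : ContinuousOn (Ssol μ N0 p S0 β) (Icc 0 T) := by
    rw [Ssol_eq_variationOfConstants]
    exact continuousOn_variationOfConstants (by fun_prop) continuousOn_const
  have hV : ContinuousOn (Vsol μ N0 p ζ ε S0 V0 β) (Icc 0 T) := by
    rw [Vsol_eq_variationOfConstants]
    exact continuousOn_variationOfConstants (by fun_prop) (by fun_prop)
  exact hS.add (continuousOn_const.mul hV)

lemma exists_effSusceptible_mem_Icc (hμ : 0 ≤ μ) (hN0 : 0 ≤ N0) (hp : 0 ≤ p) (hε : ε ≤ 1)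
    (hS0 : 0 ≤ S0) (hV0 : 0 ≤ V0) {T : ℝ} (hT : 0 ≤ T) (hβ : ContinuousOn β (Icc 0 T)) :
    ∃ C, 0 ≤ C ∧ ∀ s ∈ Icc 0 T, effSusceptible μ N0 p ζ ε S0 V0 β s ∈ Icc 0 C := by
  obtain ⟨C, hC⟩ := isCompact_Icc.bddAbove_image (continuousOn_effSusceptible hβ)
  have hmem : ∀ s ∈ Icc 0 T, effSusceptible μ N0 p ζ ε S0 V0 β s ∈ Icc 0 C := fun s hs =>
    ⟨effSusceptible_nonneg hμ hN0 hp hε hS0 hV0 hs.1, hC (mem_image_of_mem _ hs)⟩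
  exact ⟨C, (hmem 0 ⟨le_rfl, hT⟩).1.trans (hmem 0 ⟨le_rfl, hT⟩).2, hmem⟩

end EffSusceptible

def volterraKernel (μ N0 p ζ ε S0 V0 : ℝ) (βA βI k χ γA γI q ξ β : ℝ → ℝ) (u s : ℝ) :
    Matrix (Fin 3) (Fin 3) ℝ :=
  !![0, βA (u - s) * piA μ γA ξ χ (u - s), βI (u - s) * piI μ γI (u - s);
    k (u - s) * q (u - s) * effSusceptible μ N0 p ζ ε S0 V0 β s * piE μ k (u - s), 0, 0;
    k (u - s) * (1 - q (u - s)) * effSusceptible μ N0 p ζ ε S0 V0 β s * piE μ k (u - s),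
      χ (u - s) * (1 - ξ (u - s)) * piA μ γA ξ χ (u - s), 0]

section VolterraKernel

variable {μ N0 p ζ ε S0 V0 : ℝ} {βA βI k χ γA γI q ξ e0 a0 i0 β α ι : ℝ → ℝ}

lemma exists_volterraKernel_bound (hμ : 0 ≤ μ) (hN0 : 0 ≤ N0) (hp : 0 ≤ p) (hε : ε ≤ 1)
    (hβA : CoeffBM βA) (hβI : CoeffBM βI) (hk : CoeffBM k) (hχ : CoeffBM χ)
    (hγA : ∀ θ, 0 ≤ θ → 0 ≤ γA θ) (hγI : ∀ θ, 0 ≤ θ → 0 ≤ γI θ) (hq : FracBM q) (hξ : FracBM ξ)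
    (hS0 : 0 ≤ S0) (hV0 : 0 ≤ V0) {T : ℝ} (hT : 0 ≤ T) (hβ : ContinuousOn β (Icc 0 T)) :
    ∃ C, 0 ≤ C ∧ ∀ u ∈ Icc 0 T, ∀ s ∈ Icc 0 u, ∀ i j,
      volterraKernel μ N0 p ζ ε S0 V0 βA βI k χ γA γI q ξ β u s i j ∈ Icc 0 C := by
  obtain ⟨CβA, hCβA0, hCβA⟩ := hβA.exists_mem_Icc
  obtain ⟨CβI, hCβI0, hCβI⟩ := hβI.exists_mem_Icc
  obtain ⟨Ck, hCk0, hCk⟩ := hk.exists_mem_Icc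
  obtain ⟨Cχ, hCχ0, hCχ⟩ := hχ.exists_mem_Icc
  obtain ⟨CW, hCW0, hW⟩ := exists_effSusceptible_mem_Icc (ζ := ζ) hμ hN0 hp hε hS0 hV0 hT hβ
  have hCkW : 0 ≤ Ck * CW := mul_nonneg hCk0 hCW0
  have hC : 0 ≤ CβA + CβI + Ck * CW + Cχ := by positivity
  refine ⟨_, hC, fun u hu s hs i j => ?_⟩
  have hθ : 0 ≤ u - s := sub_nonneg.2 hs.2
  have hπA := piA_mem_Icc hμ hγA hχ.2.2 hξ hθ
  have hπE := piE_mem_Icc hμ hk.2.2 hθ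
  have hkW (f : ℝ → ℝ) (hf : f (u - s) ∈ Icc 0 1) := mul_mem_Icc_zero (mul_mem_Icc_zero
    (mul_mem_Icc_zero (hCk _ hθ) hf) (hW s ⟨hs.1, hs.2.trans hu.2⟩)) hπE
  have hcompl (f : ℝ → ℝ) (hf : FracBM f) : 1 - f (u - s) ∈ Icc 0 1 :=
    ⟨sub_nonneg.2 (hf.2 _ hθ).2, sub_le_self _ (hf.2 _ hθ).1⟩
  have hwiden {x D : ℝ} (hx : x ∈ Icc 0 D) (hD : D ≤ CβA + CβI + Ck * CW + Cχ) :
      x ∈ Icc 0 (CβA + CβI + Ck * CW + Cχ) := ⟨hx.1, hx.2.trans hD⟩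
  fin_cases i <;> fin_cases j <;>
    simp only [volterraKernel, Fin.zero_eta, Fin.mk_one, Fin.reduceFinMk, Fin.isValue, of_apply,
      cons_val', cons_val, cons_val_zero, cons_val_one, cons_val_fin_one]
  · exact ⟨le_rfl, hC⟩
  · exact hwiden (mul_mem_Icc_zero (hCβA _ hθ) hπA) (by linarith)
  · exact hwiden (mul_mem_Icc_zero (hCβI _ hθ) (piI_mem_Icc hμ hγI hθ)) (by linarith)
  · exact hwiden (hkW q (hq.2 _ hθ)) (by linarith)
  · exact ⟨le_rfl, hC⟩
  · exact ⟨le_rfl, hC⟩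
  · exact hwiden (hkW (fun θ => 1 - q θ) (hcompl q hq)) (by linarith)
  · exact hwiden (mul_mem_Icc_zero (mul_mem_Icc_zero (hCχ _ hθ) (hcompl ξ hξ)) hπA)
      (by linarith)
  · exact ⟨le_rfl, hC⟩

lemma integral_volterraKernel_mulVec_le (hβA : ∀ θ, 0 ≤ θ → 0 ≤ βA θ)
    (hβI : ∀ θ, 0 ≤ θ → 0 ≤ βI θ) (hk : ∀ θ, 0 ≤ θ → 0 ≤ k θ) (hχ : ∀ θ, 0 ≤ θ → 0 ≤ χ θ)
    (hq : FracBM q) (hξ : FracBM ξ)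
    (he0 : 0 ≤ᵐ[volume.restrict (Ioi 0)] e0) (ha0 : 0 ≤ᵐ[volume.restrict (Ioi 0)] a0)
    (hi0 : 0 ≤ᵐ[volume.restrict (Ioi 0)] i0)
    (hsol : VolterraSystem μ N0 p ζ ε S0 V0 βA βI k χ γA γI q ξ e0 a0 i0 β α ι)
    {u : ℝ} (hu : 0 ≤ u) (i : Fin 3) :
    ∫ s in (0:ℝ)..u,
      (volterraKernel μ N0 p ζ ε S0 V0 βA βI k χ γA γI q ξ β u s *ᵥ ![β s, α s, ι s]) i ≤
      ![β u, α u, ι u] i := by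
  obtain ⟨hβ, hα, hι⟩ := hsol.2.2.2 u hu
  have hkq : ∀ θ, 0 ≤ θ → 0 ≤ k θ * q θ := fun θ hθ => mul_nonneg (hk θ hθ) (hq.2 θ hθ).1
  have hkq' : ∀ θ, 0 ≤ θ → 0 ≤ k θ * (1 - q θ) := fun θ hθ =>
    mul_nonneg (hk θ hθ) (sub_nonneg.2 (hq.2 θ hθ).2)
  have hχξ : ∀ θ, 0 ≤ θ → 0 ≤ χ θ * (1 - ξ θ) := fun θ hθ =>
    mul_nonneg (hχ θ hθ) (sub_nonneg.2 (hξ.2 θ hθ).2)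
  have hπE : ∀ θ, 0 < piE μ k θ := fun _ => Real.exp_pos _
  have hπA : ∀ θ, 0 < piA μ γA ξ χ θ := fun _ => Real.exp_pos _
  have hπI : ∀ θ, 0 < piI μ γI θ := fun _ => Real.exp_pos _
  fin_cases i <;>
    simp only [volterraKernel, mulVec, dotProduct, Fin.sum_univ_three, Fin.zero_eta, Fin.mk_one,
      Fin.reduceFinMk, Fin.isValue, of_apply, cons_val', cons_val, cons_val_zero, cons_val_one,
      cons_val_fin_one, zero_mul, zero_add, add_zero]
  · rw [hβ]
    refine le_add_of_le_of_nonneg (le_of_eq (intervalIntegral.integral_congr fun s _ => by ring))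
      (integral_nonneg_of_ae ?_)
    filter_upwards [ae_nonneg_transport hu hβA ha0 hπA, ae_nonneg_transport hu hβI hi0 hπI]
      with s h1 h2 using add_nonneg h1 h2
  · rw [hα]
    refine le_add_of_le_of_nonneg (le_of_eq (intervalIntegral.integral_congr fun s _ => by
      simp only [effSusceptible]; ring))
      (integral_nonneg_of_ae (ae_nonneg_transport hu hkq he0 hπE))
  · rw [hι]
    refine le_add_of_le_of_nonneg (le_of_eq (intervalIntegral.integral_congr fun s _ => by
      simp only [effSusceptible]; ring)) (integral_nonneg_of_ae ?_)
    filter_upwards [ae_nonneg_transport hu hkq' he0 hπE, ae_nonneg_transport hu hχξ ha0 hπA]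
      with s h1 h2 using add_nonneg h1 h2

end VolterraKernel

theorem volterra_solution_nonneg_general
    (μ N0 p ζ ε S0 V0 : ℝ) (βA βI k χ γA γI q ξ e0 a0 i0 : ℝ → ℝ)
    (hμ : 0 < μ) (hN0 : 0 ≤ N0) (hp : 0 ≤ p) (hε : ε ∈ Set.Icc (0:ℝ) 1)
    (hβA : CoeffBM βA) (hβI : CoeffBM βI) (hk : CoeffBM k) (hχ : CoeffBM χ)
    (hγA : CoeffBM γA) (hγI : CoeffBM γI) (hq : FracBM q) (hξ : FracBM ξ)
    (hS0 : 0 ≤ S0) (hV0 : 0 ≤ V0)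
    (he0nn : 0 ≤ᵐ[volume.restrict (Set.Ioi (0:ℝ))] e0)
    (ha0nn : 0 ≤ᵐ[volume.restrict (Set.Ioi (0:ℝ))] a0)
    (hi0nn : 0 ≤ᵐ[volume.restrict (Set.Ioi (0:ℝ))] i0)
    (β α ι : ℝ → ℝ)
    (hsol : VolterraSystem μ N0 p ζ ε S0 V0 βA βI k χ γA γI q ξ e0 a0 i0 β α ι) :
    ∀ t, 0 ≤ t → 0 ≤ β t ∧ 0 ≤ α t ∧ 0 ≤ ι t := by
  intro T hT
  obtain ⟨hβc, hαc, hιc, -⟩ := id hsol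
  obtain ⟨C, hC, hkernel⟩ := exists_volterraKernel_bound (ζ := ζ) hμ.le hN0 hp hε.2
    hβA hβI hk hχ hγA.2.2 hγI.2.2 hq hξ hS0 hV0 hT (hβc.mono Icc_subset_Ici_self)
  have hcont : ContinuousOn (fun t => ![β t, α t, ι t]) (Icc 0 T) :=
    (hβc.matrixVecCons (hαc.matrixVecCons (hιc.matrixVecCons continuousOn_const))).mono
      Icc_subset_Ici_self
  have hnonneg := nonneg_of_integral_mulVec_le hC hcont hkernel fun u hu =>
    integral_volterraKernel_mulVec_le hβA.2.2 hβI.2.2 hk.2.2 hχ.2.2 hq hξ he0nn ha0nn hi0nn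
      hsol hu.1
  exact ⟨hnonneg T ⟨hT, le_rfl⟩ 0, hnonneg T ⟨hT, le_rfl⟩ 1, hnonneg T ⟨hT, le_rfl⟩ 2⟩

/-- If the initial data are nonnegative, then the (unique)
continuous solution `(β, α, ι)` of the Volterra system is nonnegative on `ℝ≥0`. -/
theorem volterra_solution_nonneg
    (μ N0 p ζ ε S0 V0 : ℝ) (βA βI k χ γA γI q ξ e0 a0 i0 : ℝ → ℝ)
    (hμ : 0 < μ) (hN0 : 0 ≤ N0) (hp : 0 ≤ p) (hζ : 0 ≤ ζ) (hε : ε ∈ Set.Icc (0:ℝ) 1)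
    (hβA : CoeffBM βA) (hβI : CoeffBM βI) (hk : CoeffBM k) (hχ : CoeffBM χ)
    (hγA : CoeffBM γA) (hγI : CoeffBM γI) (hq : FracBM q) (hξ : FracBM ξ)
    (he0 : IntegrableOn e0 (Set.Ioi 0)) (ha0 : IntegrableOn a0 (Set.Ioi 0))
    (hi0 : IntegrableOn i0 (Set.Ioi 0))
    (hS0 : 0 ≤ S0) (hV0 : 0 ≤ V0)
    (he0nn : 0 ≤ᵐ[volume.restrict (Set.Ioi (0:ℝ))] e0)
    (ha0nn : 0 ≤ᵐ[volume.restrict (Set.Ioi (0:ℝ))] a0)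
    (hi0nn : 0 ≤ᵐ[volume.restrict (Set.Ioi (0:ℝ))] i0)
    (β α ι : ℝ → ℝ)
    (hsol : VolterraSystem μ N0 p ζ ε S0 V0 βA βI k χ γA γI q ξ e0 a0 i0 β α ι) :
    ∀ t, 0 ≤ t → 0 ≤ β t ∧ 0 ≤ α t ∧ 0 ≤ ι t :=
  volterra_solution_nonneg_general μ N0 p ζ ε S0 V0 βA βI k χ γA γI q ξ e0 a0 i0 hμ hN0 hp hε hβA
    hβI hk hχ hγA hγI hq hξ hS0 hV0 he0nn ha0nn hi0nn β α ι hsol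
end
end

section
/- Define e(t,θ) := e0(θ−t)·π_E(θ)/π_E(θ−t) for 0 ≤ t < θ and e(t,θ) := ε̃(t−θ)·π_E(θ) for 0 ≤ θ ≤ t. Then e(t,0) = ε̃(t) for all t > 0, e(0,θ) = e0(θ) for a.e. θ ≥ 0, and for almost every (t,θ) ∈ ℝ≥0 × ℝ≥0 the limit lim_{h→0} (e(t+h, θ+h) − e(t,θ))/h exists and equals −(k(θ)+μ)·e(t,θ). -/
/-! Along a characteristic `h ↦ (t + h, θ + h)` the density is a fixed multiple of
`π_E(θ + h)`, so the transport equation reduces to differentiating `π_E`. By the Lebesgue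
differentiation theorem, `θ ↦ ∫₀^θ (k + μ)` has derivative `k(θ) + μ` at almost every `θ`. -/

open MeasureTheory Filter

noncomputable section

open scoped Topology

theorem CoeffBM.locallyIntegrableOn {k : ℝ → ℝ} (hk : CoeffBM k) :
    LocallyIntegrableOn k (Set.Ici 0) := by
  obtain ⟨hk_meas, ⟨C, hk_le⟩, hk_nonneg⟩ := hk
  refine (locallyIntegrableOn_iff isClosed_Ici.isLocallyClosed).2 fun K hK hKc =>
    IntegrableOn.of_bound hKc.measure_lt_top hk_meas.aestronglyMeasurable C ?_
  filter_upwards [ae_restrict_mem hKc.measurableSet] with θ hθ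
  rw [Real.norm_of_nonneg (hk_nonneg θ (hK hθ))]
  exact hk_le θ (hK hθ)

theorem ae_hasDerivAt_piE (μ : ℝ) {k : ℝ → ℝ} (hk : LocallyIntegrableOn k (Set.Ici 0)) :
    ∀ᵐ θ ∂volume.restrict (Set.Ici 0), HasDerivAt (piE μ k) (-(k θ + μ) * piE μ k θ) θ := by
  have hint (n : ℕ) : IntervalIntegrable (fun τ => k τ + μ) volume 0 n := by
    refine ((intervalIntegrable_iff_integrableOn_Icc_of_le n.cast_nonneg).2 ?_).add
      intervalIntegrable_const
    exact hk.integrableOn_compact_subset Set.Icc_subset_Ici_self isCompact_Icc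
  rw [ae_restrict_iff' measurableSet_Ici]
  filter_upwards [ae_all_iff.2 fun n => (hint n).ae_hasDerivAt_integral] with θ hθ hθ_nonneg
  have hθ_mem : θ ∈ Set.uIcc 0 (⌈θ⌉₊ : ℝ) := by
    rw [Set.uIcc_of_le (Nat.cast_nonneg _)]
    exact ⟨hθ_nonneg, Nat.le_ceil θ⟩
  have hF := hθ ⌈θ⌉₊ hθ_mem 0 Set.left_mem_uIcc
  have hexp : HasDerivAt (fun x => Real.exp (-∫ τ in 0..x, k τ + μ))
      (Real.exp (-∫ τ in 0..θ, k τ + μ) * -(k θ + μ)) θ := hF.neg.exp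
  rw [piE, mul_comm]
  exact hexp

theorem dens_add_add (π f0 bdry : ℝ → ℝ) (t θ h : ℝ) :
    dens π f0 bdry (t + h) (θ + h) =
      (if t < θ then f0 (θ - t) / π (θ - t) else bdry (t - θ)) * π (θ + h) := by
  simp only [dens, add_lt_add_iff_right, add_sub_add_right_eq_sub]
  split_ifs
  · exact mul_div_right_comm ..
  · rfl

theorem tendsto_dens_slope_diagonal {π f0 bdry : ℝ → ℝ} {t θ c : ℝ}
    (hπ : HasDerivAt π (c * π θ) θ) :
    Tendsto (fun h => (dens π f0 bdry (t + h) (θ + h) - dens π f0 bdry t θ) / h)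
      (𝓝[≠] 0) (𝓝 (c * dens π f0 bdry t θ)) := by
  set a := if t < θ then f0 (θ - t) / π (θ - t) else bdry (t - θ)
  have hdens (h : ℝ) : dens π f0 bdry (t + h) (θ + h) = a * π (θ + h) := dens_add_add ..
  have hdens₀ : dens π f0 bdry t θ = a * π θ := by simpa using hdens 0
  convert hπ.tendsto_slope_zero.const_mul a using 1
  · ext h
    rw [hdens, hdens₀, smul_eq_mul]
    ring
  · rw [hdens₀, mul_left_comm]

theorem exposed_density_transport_general
    (μ : ℝ) (k e0 εt : ℝ → ℝ)
    (hk : CoeffBM k) :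
    (∀ t, 0 < t → dens (piE μ k) e0 εt t 0 = εt t) ∧
    (dens (piE μ k) e0 εt 0 =ᵐ[volume.restrict (Set.Ioi (0:ℝ))] e0) ∧
    (∀ᵐ z ∂((volume : Measure (ℝ × ℝ)).restrict (Set.Ici 0 ×ˢ Set.Ici 0)),
      Tendsto
        (fun h => (dens (piE μ k) e0 εt (z.1 + h) (z.2 + h) - dens (piE μ k) e0 εt z.1 z.2) / h)
        (nhdsWithin (0:ℝ) {(0:ℝ)}ᶜ)
        (nhds (-(k z.2 + μ) * dens (piE μ k) e0 εt z.1 z.2))) := by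
  refine ⟨fun t ht => ?_, ?_, ?_⟩
  · simp [dens, ht.not_gt, piE]
  · filter_upwards [ae_restrict_mem measurableSet_Ioi] with θ (hθ : 0 < θ)
    simp [dens, hθ, piE, (Real.exp_pos _).ne']
  · rw [Measure.volume_eq_prod, ← Measure.prod_restrict]
    filter_upwards [Measure.quasiMeasurePreserving_snd.ae
      (ae_hasDerivAt_piE μ hk.locallyIntegrableOn)] with z hz
    exact tendsto_dens_slope_diagonal hz

/-- The exposed age density defined along characteristics
satisfies the boundary condition for `t > 0`, the initial condition a.e., and
the transport equation a.e. in the sense of directional derivatives. -/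
theorem exposed_density_transport
    (μ : ℝ) (k e0 εt : ℝ → ℝ)
    (hμ : 0 < μ) (hk : CoeffBM k)
    (hεt : ContinuousOn εt (Set.Ici 0))
    (he0 : IntegrableOn e0 (Set.Ioi 0)) :
    (∀ t, 0 < t → dens (piE μ k) e0 εt t 0 = εt t) ∧
    (dens (piE μ k) e0 εt 0 =ᵐ[volume.restrict (Set.Ioi (0:ℝ))] e0) ∧
    (∀ᵐ z ∂((volume : Measure (ℝ × ℝ)).restrict (Set.Ici 0 ×ˢ Set.Ici 0)),
      Tendsto
        (fun h => (dens (piE μ k) e0 εt (z.1 + h) (z.2 + h) - dens (piE μ k) e0 εt z.1 z.2) / h)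
        (nhdsWithin (0:ℝ) {(0:ℝ)}ᶜ)
        (nhds (-(k z.2 + μ) * dens (piE μ k) e0 εt z.1 z.2))) :=
  exposed_density_transport_general μ k e0 εt hk
end
end

section
/- Any steady state satisfies the explicit formulas: e*(θ) = β*·M(β*)·π_E(θ), a*(θ) = β*·M(β*)·(∫₀^∞ k(s)q(s)π_E(s) ds)·π_A(θ), and i*(θ) = β*·M(β*)·(∫₀^∞ k(s)(1−q(s))π_E(s) ds + (∫₀^∞ k(s)q(s)π_E(s) ds)·(∫₀^∞ χ(s)(1−ξ(s))π_A(s) ds))·π_I(θ) for all θ ≥ 0, where M(β*) := (μN0/(p+β*+μ))·(1 + p(1−ε)/(ζε+β*(1−ε)+μ)). -/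
open MeasureTheory Filter

noncomputable section

/-!
The steady-state equations determine everything from `β*`. Substituting `S*` and `V*` into
`ε* = β*(S* + (1-ε)V*)` gives `ε* = β* M(β*)` by a field identity. Since `e* = ε* π_E` and
`a* = α* π_A`, the constants `α*` and `ι*` are `ε*` and `α*` times integrals of the survival
kernels against the transition rates; these integrals exist because every hazard is at least
`μ > 0`, so the kernels decay like `exp (-μ θ)`.
-/

open Set

namespace CoeffBM

variable {f g : ℝ → ℝ}

lemma exists_abs_le (hf : CoeffBM f) : ∃ C, ∀ θ, 0 ≤ θ → |f θ| ≤ C := by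
  obtain ⟨-, ⟨C, hC⟩, hf0⟩ := hf
  exact ⟨C, fun θ hθ => (abs_of_nonneg (hf0 θ hθ)).trans_le (hC θ hθ)⟩

lemma add (hf : CoeffBM f) (hg : CoeffBM g) : CoeffBM fun θ => f θ + g θ := by
  obtain ⟨hfm, ⟨C, hC⟩, hf0⟩ := hf
  obtain ⟨hgm, ⟨D, hD⟩, hg0⟩ := hg
  exact ⟨hfm.add hgm, ⟨C + D, fun θ hθ => add_le_add (hC θ hθ) (hD θ hθ)⟩,
    fun θ hθ => add_nonneg (hf0 θ hθ) (hg0 θ hθ)⟩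

lemma mul (hf : CoeffBM f) (hg : CoeffBM g) : CoeffBM fun θ => f θ * g θ := by
  obtain ⟨hfm, ⟨C, hC⟩, hf0⟩ := hf
  obtain ⟨hgm, ⟨D, hD⟩, hg0⟩ := hg
  refine ⟨hfm.mul hgm, ⟨C * D, fun θ hθ => ?_⟩, fun θ hθ => mul_nonneg (hf0 θ hθ) (hg0 θ hθ)⟩
  exact mul_le_mul (hC θ hθ) (hD θ hθ) (hg0 θ hθ) ((hf0 θ hθ).trans (hC θ hθ))

lemma integrableOn_Icc (hf : CoeffBM f) {a b : ℝ} (ha : 0 ≤ a) : IntegrableOn f (Icc a b) := by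
  obtain ⟨C, hC⟩ := hf.exists_abs_le
  refine Measure.integrableOn_of_bounded (M := C) measure_Icc_lt_top.ne
    hf.1.aestronglyMeasurable ?_
  filter_upwards [ae_restrict_mem measurableSet_Icc] with θ hθ
  exact hC θ (ha.trans hθ.1)

end CoeffBM

namespace FracBM

variable {f : ℝ → ℝ}

lemma coeffBM (hf : FracBM f) : CoeffBM f :=
  ⟨hf.1, ⟨1, fun θ hθ => (hf.2 θ hθ).2⟩, fun θ hθ => (hf.2 θ hθ).1⟩

lemma one_sub (hf : FracBM f) : FracBM fun θ => 1 - f θ := by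
  refine ⟨measurable_const.sub hf.1, fun θ hθ => ?_⟩
  obtain ⟨h0, h1⟩ := hf.2 θ hθ
  constructor <;> linarith

end FracBM

lemma continuousOn_primitive_Ici {f : ℝ → ℝ} {a : ℝ} (hf : ∀ b, IntegrableOn f (Icc a b)) :
    ContinuousOn (fun x => ∫ t in a..x, f t) (Ici a) := by
  intro x hx
  have hax : a ≤ x + 1 := by linarith [mem_Ici.1 hx]
  have hcont := intervalIntegral.continuousOn_primitive_interval
    (by rw [uIcc_of_le hax]; exact hf (x + 1))
  rw [uIcc_of_le hax] at hcont
  refine (hcont x ⟨hx, by linarith⟩).mono_of_mem_nhdsWithin ?_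
  rw [← Ici_inter_Iic]
  exact inter_mem_nhdsWithin _ (Iic_mem_nhds (by linarith))

lemma mul_le_integral_add {h : ℝ → ℝ} {μ θ : ℝ} (hθ : 0 ≤ θ)
    (hh : IntervalIntegrable h volume 0 θ) (hh0 : ∀ τ ∈ Icc 0 θ, 0 ≤ h τ) :
    μ * θ ≤ ∫ τ in (0:ℝ)..θ, (h τ + μ) := by
  have hle : ∫ _ in (0:ℝ)..θ, μ ≤ ∫ τ in (0:ℝ)..θ, (h τ + μ) :=
    intervalIntegral.integral_mono_on hθ intervalIntegrable_const
      (hh.add intervalIntegrable_const) fun τ hτ => le_add_of_nonneg_left (hh0 τ hτ)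
  simpa [mul_comm] using hle

lemma CoeffBM.integrableOn_mul_exp_neg_integral_add {g h : ℝ → ℝ} {μ : ℝ} (hh : CoeffBM h)
    (hg : Measurable g) (hg_bdd : ∃ C, ∀ θ, 0 ≤ θ → |g θ| ≤ C) (hμ : 0 < μ) :
    IntegrableOn (fun θ => g θ * Real.exp (-∫ τ in (0:ℝ)..θ, (h τ + μ))) (Ioi 0) := by
  obtain ⟨C, hC⟩ := hg_bdd
  have hrate : CoeffBM fun τ => h τ + μ :=
    hh.add ⟨measurable_const, ⟨μ, fun _ _ => le_rfl⟩, fun _ _ => hμ.le⟩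
  have hprim : AEMeasurable (fun θ => ∫ τ in (0:ℝ)..θ, (h τ + μ)) (volume.restrict (Ioi 0)) :=
    ((continuousOn_primitive_Ici fun _ => hrate.integrableOn_Icc le_rfl).aemeasurable
      measurableSet_Ici).mono_measure (Measure.restrict_mono Ioi_subset_Ici_self le_rfl)
  have hdom : IntegrableOn (fun θ => C * Real.exp (-μ * θ)) (Ioi 0) :=
    (exp_neg_integrableOn_Ioi 0 hμ).const_mul C
  refine hdom.mono' (hg.aestronglyMeasurable.mul
    (Real.measurable_exp.comp_aemeasurable hprim.neg).aestronglyMeasurable) ?_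
  filter_upwards [ae_restrict_mem measurableSet_Ioi] with θ hθ
  have hθ0 : (0:ℝ) ≤ θ := le_of_lt hθ
  have hdecay : μ * θ ≤ ∫ τ in (0:ℝ)..θ, (h τ + μ) :=
    mul_le_integral_add hθ0
      ((intervalIntegrable_iff_integrableOn_Icc_of_le hθ0).2 (hh.integrableOn_Icc le_rfl))
      fun τ hτ => hh.2.2 τ hτ.1
  rw [norm_mul, Real.norm_eq_abs, Real.norm_of_nonneg (Real.exp_pos _).le]
  exact mul_le_mul (hC θ hθ0) (Real.exp_le_exp.2 (by linarith)) (Real.exp_pos _).le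
    ((abs_nonneg _).trans (hC θ hθ0))

section WeightedIntegral

variable {α : Type*} [MeasurableSpace α] {ν : Measure α} {s : Set α}

lemma setIntegral_mul_of_eqOn_const_mul (hs : MeasurableSet s) {w f φ : α → ℝ} {c : ℝ}
    (hf : ∀ x ∈ s, f x = c * φ x) :
    ∫ x in s, w x * f x ∂ν = c * ∫ x in s, w x * φ x ∂ν := by
  rw [← integral_const_mul]
  exact setIntegral_congr_fun hs fun x hx => by simp only [hf x hx]; ring

lemma setIntegral_mul_add_mul_of_eqOn_const_mul (hs : MeasurableSet s)
    {w₁ w₂ f₁ f₂ φ₁ φ₂ : α → ℝ} {c₁ c₂ : ℝ}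
    (hf₁ : ∀ x ∈ s, f₁ x = c₁ * φ₁ x) (hf₂ : ∀ x ∈ s, f₂ x = c₂ * φ₂ x)
    (hφ₁ : IntegrableOn (fun x => w₁ x * φ₁ x) s ν) (hφ₂ : IntegrableOn (fun x => w₂ x * φ₂ x) s ν) :
    ∫ x in s, (w₁ x * f₁ x + w₂ x * f₂ x) ∂ν =
      c₁ * (∫ x in s, w₁ x * φ₁ x ∂ν) + c₂ * ∫ x in s, w₂ x * φ₂ x ∂ν := by
  rw [← integral_const_mul, ← integral_const_mul,
    ← integral_add (hφ₁.const_mul c₁) (hφ₂.const_mul c₂)]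
  exact setIntegral_congr_fun hs fun x hx => by simp only [hf₁ x hx, hf₂ x hx]; ring

end WeightedIntegral

theorem steady_state_explicit_formulas_general
    (μ N0 p ζ ε : ℝ) (βA βI k χ γA γI q ξ : ℝ → ℝ)
    (hμ : 0 < μ)
    (hk : CoeffBM k) (hχ : CoeffBM χ)
    (hγA : CoeffBM γA) (hq : FracBM q) (hξ : FracBM ξ)
    (Sst Vst βst εst αst ιst : ℝ) (est ast ist : ℝ → ℝ)
    (hss : SteadyState μ N0 p ζ ε βA βI k χ γA γI q ξ Sst Vst βst εst αst ιst est ast ist) :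
    ∀ θ, 0 ≤ θ →
      est θ = βst * ((μ * N0 / (p + βst + μ)) *
          (1 + p * (1 - ε) / (ζ * ε + βst * (1 - ε) + μ))) * piE μ k θ ∧
      ast θ = βst * ((μ * N0 / (p + βst + μ)) *
          (1 + p * (1 - ε) / (ζ * ε + βst * (1 - ε) + μ))) *
        (∫ s in Set.Ioi (0:ℝ), k s * q s * piE μ k s) * piA μ γA ξ χ θ ∧
      ist θ = βst * ((μ * N0 / (p + βst + μ)) *
          (1 + p * (1 - ε) / (ζ * ε + βst * (1 - ε) + μ))) *
        ((∫ s in Set.Ioi (0:ℝ), k s * (1 - q s) * piE μ k s) +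
          (∫ s in Set.Ioi (0:ℝ), k s * q s * piE μ k s) *
            (∫ s in Set.Ioi (0:ℝ), χ s * (1 - ξ s) * piA μ γA ξ χ s)) * piI μ γI θ := by
  obtain ⟨-, -, -, -, -, -, -, -, -, hS, hV, hE, hA, hI, hεeq, hαeq, hιeq, -⟩ := hss
  have hE' : ∀ θ ∈ Ioi (0:ℝ), est θ = εst * piE μ k θ := fun θ hθ => hE θ (le_of_lt hθ)
  have hA' : ∀ θ ∈ Ioi (0:ℝ), ast θ = αst * piA μ γA ξ χ θ := fun θ hθ => hA θ (le_of_lt hθ)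
  have hεM : εst = βst * ((μ * N0 / (p + βst + μ)) *
      (1 + p * (1 - ε) / (ζ * ε + βst * (1 - ε) + μ))) := by
    rw [hεeq, hV, hS]; ring
  have hαM : αst = εst * ∫ s in Ioi (0:ℝ), k s * q s * piE μ k s := by
    rw [hαeq]; exact setIntegral_mul_of_eqOn_const_mul measurableSet_Ioi hE'
  have hkq : CoeffBM fun θ => k θ * (1 - q θ) := hk.mul hq.one_sub.coeffBM
  have hχξ : CoeffBM fun θ => χ θ * (1 - ξ θ) := hχ.mul hξ.one_sub.coeffBM
  have hιM : ιst = εst * (∫ s in Ioi (0:ℝ), k s * (1 - q s) * piE μ k s) +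
      αst * ∫ s in Ioi (0:ℝ), χ s * (1 - ξ s) * piA μ γA ξ χ s := by
    rw [hιeq]
    refine setIntegral_mul_add_mul_of_eqOn_const_mul measurableSet_Ioi hE' hA' ?_ ?_
    · exact hk.integrableOn_mul_exp_neg_integral_add hkq.1 hkq.exists_abs_le hμ
    · exact ((hγA.mul hξ.coeffBM).add hχξ).integrableOn_mul_exp_neg_integral_add hχξ.1
        hχξ.exists_abs_le hμ
  intro θ hθ
  refine ⟨?_, ?_, ?_⟩
  · rw [hE θ hθ, hεM]
  · rw [hA θ hθ, hαM, hεM]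
  · rw [hI θ hθ, hιM, hαM, hεM]; ring

/-- Explicit formulas for a steady state: each of the
densities `e*, a*, i*` equals `β*·M(β*)` times an explicit constant times the
corresponding survival kernel, where
`M(β*) = (μN0/(p+β*+μ))·(1 + p(1−ε)/(ζε+β*(1−ε)+μ))`. -/
theorem steady_state_explicit_formulas
    (μ N0 p ζ ε : ℝ) (βA βI k χ γA γI q ξ : ℝ → ℝ)
    (hμ : 0 < μ) (hN0 : 0 ≤ N0) (hp : 0 ≤ p) (hζ : 0 ≤ ζ) (hε : ε ∈ Set.Icc (0:ℝ) 1)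
    (hβA : CoeffBM βA) (hβI : CoeffBM βI) (hk : CoeffBM k) (hχ : CoeffBM χ)
    (hγA : CoeffBM γA) (hγI : CoeffBM γI) (hq : FracBM q) (hξ : FracBM ξ)
    (Sst Vst βst εst αst ιst : ℝ) (est ast ist : ℝ → ℝ)
    (hss : SteadyState μ N0 p ζ ε βA βI k χ γA γI q ξ Sst Vst βst εst αst ιst est ast ist) :
    ∀ θ, 0 ≤ θ →
      est θ = βst * ((μ * N0 / (p + βst + μ)) *
          (1 + p * (1 - ε) / (ζ * ε + βst * (1 - ε) + μ))) * piE μ k θ ∧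
      ast θ = βst * ((μ * N0 / (p + βst + μ)) *
          (1 + p * (1 - ε) / (ζ * ε + βst * (1 - ε) + μ))) *
        (∫ s in Set.Ioi (0:ℝ), k s * q s * piE μ k s) * piA μ γA ξ χ θ ∧
      ist θ = βst * ((μ * N0 / (p + βst + μ)) *
          (1 + p * (1 - ε) / (ζ * ε + βst * (1 - ε) + μ))) *
        ((∫ s in Set.Ioi (0:ℝ), k s * (1 - q s) * piE μ k s) +
          (∫ s in Set.Ioi (0:ℝ), k s * q s * piE μ k s) *
            (∫ s in Set.Ioi (0:ℝ), χ s * (1 - ξ s) * piA μ γA ξ χ s)) * piI μ γI θ :=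
  steady_state_explicit_formulas_general μ N0 p ζ ε βA βI k χ γA γI q ξ hμ hk hχ hγA hq hξ Sst Vst
    βst εst αst ιst est ast ist hss
end
end

section
/- For every real β > 0, the equation g(β) = 1 holds if and only if b2·β² + b1·β + b0 = 0. -/
open MeasureTheory Filter

noncomputable section

theorem vaccinated_exit_rate_pos {μ ζ ε β : ℝ} (hμ : 0 < μ) (hζ : 0 ≤ ζ)
    (hε : ε ∈ Set.Icc (0:ℝ) 1) (hβ : 0 ≤ β) : 0 < ζ * ε + β * (1 - ε) + μ := by
  have := mul_nonneg hζ hε.1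
  have := mul_nonneg hβ (sub_nonneg.2 hε.2)
  linarith

theorem gfun_eq_div {μ N0 p ζ ε RA RI β : ℝ} (hV : ζ * ε + β * (1 - ε) + μ ≠ 0) :
    gfun μ N0 p ζ ε RA RI β =
      μ * N0 * (RA + RI) * (ζ * ε + β * (1 - ε) + μ + p * (1 - ε)) /
        ((p + β + μ) * (ζ * ε + β * (1 - ε) + μ)) := by
  rw [gfun, one_add_div hV, div_mul_div_comm]
  ring

theorem quadratic_eq_denominator_sub_numerator {K : Type*} [Field K] {μ N0 p ζ ε RA RI : K}
    (hS : p + μ ≠ 0) (hV : ζ * ε + μ ≠ 0) (β : K) :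
    (1 - ε) * β ^ 2 +
        ((p + μ) * (1 - ε) + ζ * ε + μ - μ * N0 * (1 - ε) * (RA + RI)) * β +
        (p + μ) * (ζ * ε + μ) *
          (1 - (μ * N0 / (p + μ)) * (1 + p * (1 - ε) / (ζ * ε + μ)) * (RA + RI)) =
      (p + β + μ) * (ζ * ε + β * (1 - ε) + μ) -
        μ * N0 * (RA + RI) * (ζ * ε + β * (1 - ε) + μ + p * (1 - ε)) := by
  rw [one_add_div hV, div_mul_div_comm, div_mul_eq_mul_div, mul_one_sub ((p + μ) * (ζ * ε + μ)),
    mul_div_cancel₀ _ (mul_ne_zero hS hV)]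
  ring

theorem gfun_eq_one_iff_quadratic_general
    (μ N0 p ζ ε RA RI : ℝ)
    (hμ : 0 < μ) (hp : 0 ≤ p) (hζ : 0 ≤ ζ) (hε : ε ∈ Set.Icc (0:ℝ) 1)
    (β : ℝ) (hβ : 0 < β) :
    gfun μ N0 p ζ ε RA RI β = 1 ↔
      (1 - ε) * β ^ 2 +
          ((p + μ) * (1 - ε) + ζ * ε + μ - μ * N0 * (1 - ε) * (RA + RI)) * β +
          (p + μ) * (ζ * ε + μ) *
            (1 - (μ * N0 / (p + μ)) * (1 + p * (1 - ε) / (ζ * ε + μ)) * (RA + RI)) = 0 := by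
  have hS : 0 < p + β + μ := by linarith
  have hV : 0 < ζ * ε + β * (1 - ε) + μ := vaccinated_exit_rate_pos hμ hζ hε hβ.le
  have hV₀ : 0 < ζ * ε + μ := by simpa using vaccinated_exit_rate_pos hμ hζ hε le_rfl
  rw [gfun_eq_div hV.ne', div_eq_one_iff_eq (mul_pos hS hV).ne',
    quadratic_eq_denominator_sub_numerator (by linarith) hV₀.ne', sub_eq_zero, eq_comm]

/-- For every `β > 0`, the equation `g(β) = 1` holds if and
only if `b2·β² + b1·β + b0 = 0`. -/
theorem gfun_eq_one_iff_quadratic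
    (μ N0 p ζ ε RA RI : ℝ)
    (hμ : 0 < μ) (hN0 : 0 ≤ N0) (hp : 0 ≤ p) (hζ : 0 ≤ ζ) (hε : ε ∈ Set.Icc (0:ℝ) 1)
    (hRA : 0 ≤ RA) (hRI : 0 ≤ RI)
    (β : ℝ) (hβ : 0 < β) :
    gfun μ N0 p ζ ε RA RI β = 1 ↔
      (1 - ε) * β ^ 2 +
          ((p + μ) * (1 - ε) + ζ * ε + μ - μ * N0 * (1 - ε) * (RA + RI)) * β +
          (p + μ) * (ζ * ε + μ) *
            (1 - (μ * N0 / (p + μ)) * (1 + p * (1 - ε) / (ζ * ε + μ)) * (RA + RI)) = 0 :=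
  gfun_eq_one_iff_quadratic_general μ N0 p ζ ε RA RI hμ hp hζ hε β hβ
end
end

section
/- If R0 ≤ 1, then every real β ≥ 0 satisfying the fixed-point equation β = β·g(β) equals 0; equivalently, there is no β > 0 with g(β) = 1. -/
open MeasureTheory Filter

noncomputable section

/-! Writing `g(β) = μN₀ · B(β) · (R_A + R_I) / (p + β + μ)`, the vaccination factor
`B(β) = 1 + p(1−ε)/(ζε + β(1−ε) + μ)` is antitone in `β`. Hence
`g(β)(p + β + μ) ≤ g(0)(p + μ) = R₀(p + μ) ≤ p + μ`, which forces `g(β) < 1` as soon as `β > 0`. -/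

section
variable {μ N0 p ζ ε RA RI β : ℝ}

theorem gfun_mul_eq (h : p + β + μ ≠ 0) :
    gfun μ N0 p ζ ε RA RI β * (p + β + μ) =
      μ * N0 * (1 + p * (1 - ε) / (ζ * ε + β * (1 - ε) + μ)) * (RA + RI) := by
  unfold gfun
  field_simp

theorem gfun_mul_le_gfun_zero_mul (hμ : 0 < μ) (hN0 : 0 ≤ N0) (hp : 0 ≤ p) (hζ : 0 ≤ ζ)
    (hε : ε ∈ Set.Icc (0:ℝ) 1) (hR : 0 ≤ RA + RI) (hβ : 0 ≤ β) :
    gfun μ N0 p ζ ε RA RI β * (p + β + μ) ≤ gfun μ N0 p ζ ε RA RI 0 * (p + μ) := by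
  obtain ⟨hε0, hε1⟩ := hε
  have h0 := gfun_mul_eq (μ := μ) (N0 := N0) (ζ := ζ) (ε := ε) (RA := RA) (RI := RI)
    (show p + 0 + μ ≠ 0 by positivity)
  simp only [add_zero, zero_mul] at h0
  rw [gfun_mul_eq (by positivity), h0]
  gcongr
  exact le_add_of_nonneg_right (mul_nonneg hβ (sub_nonneg.2 hε1))

theorem gfun_lt_one_of_pos (hμ : 0 < μ) (hN0 : 0 ≤ N0) (hp : 0 ≤ p) (hζ : 0 ≤ ζ)
    (hε : ε ∈ Set.Icc (0:ℝ) 1) (hR : 0 ≤ RA + RI)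
    (hR0 : gfun μ N0 p ζ ε RA RI 0 ≤ 1) (hβ : 0 < β) :
    gfun μ N0 p ζ ε RA RI β < 1 := by
  refine lt_of_mul_lt_mul_right (a := p + β + μ) ?_ (by positivity)
  calc gfun μ N0 p ζ ε RA RI β * (p + β + μ)
      ≤ gfun μ N0 p ζ ε RA RI 0 * (p + μ) :=
        gfun_mul_le_gfun_zero_mul hμ hN0 hp hζ hε hR hβ.le
    _ ≤ 1 * (p + μ) := by gcongr
    _ < 1 * (p + β + μ) := by linarith

end

/-- If `R₀ ≤ 1`, then every `β ≥ 0` satisfying the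
fixed-point equation `β = β·g(β)` equals `0`; equivalently, there is no
`β > 0` with `g(β) = 1`. -/
theorem no_positive_fixed_point_of_R0_le_one
    (μ N0 p ζ ε RA RI : ℝ)
    (hμ : 0 < μ) (hN0 : 0 ≤ N0) (hp : 0 ≤ p) (hζ : 0 ≤ ζ) (hε : ε ∈ Set.Icc (0:ℝ) 1)
    (hRA : 0 ≤ RA) (hRI : 0 ≤ RI)
    (hR0 : (μ * N0 / (p + μ)) * (1 + p * (1 - ε) / (ζ * ε + μ)) * (RA + RI) ≤ 1) :
    (∀ β : ℝ, 0 ≤ β → β = β * gfun μ N0 p ζ ε RA RI β → β = 0) ∧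
      ¬ ∃ β : ℝ, 0 < β ∧ gfun μ N0 p ζ ε RA RI β = 1 := by
  have hR0' : gfun μ N0 p ζ ε RA RI 0 ≤ 1 := by simpa [gfun] using hR0
  have hlt : ∀ β : ℝ, 0 < β → gfun μ N0 p ζ ε RA RI β < 1 := fun β hβ =>
    gfun_lt_one_of_pos hμ hN0 hp hζ hε (add_nonneg hRA hRI) hR0' hβ
  refine ⟨fun β hβ hfix => ?_, fun ⟨β, hβ, hg⟩ => (hlt β hβ).ne hg⟩
  by_contra hne
  have hg : gfun μ N0 p ζ ε RA RI β = 1 :=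
    (mul_right_eq_self₀.1 hfix.symm).resolve_right hne
  exact (hlt β (lt_of_le_of_ne hβ (Ne.symm hne))).ne hg
end
end

section
/- If N0 > 0 and R_A + R_I > 0, then g is strictly decreasing on [0, ∞), g(0) = R0, and g(β) → 0 as β → ∞. -/
open MeasureTheory Filter

noncomputable section

/-! `g(β) = S*(β) · W(β) · (R_A + R_I)` with `S*(β) = μN0 / (p + β + μ)` the steady-state
susceptible population and `W(β) = (S* + (1 - ε)V*) / S*`. The factor `S*` is positive, strictly
decreasing and tends to `0`; `W` is positive and decreasing, hence bounded on `[0, ∞)`; so the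
product is strictly decreasing and tends to `0`. -/

open Set

theorem StrictAntiOn.mul_antitoneOn {α M₀ : Type*} [Preorder α] [Mul M₀] [Zero M₀] [Preorder M₀]
    [PosMulMono M₀] [MulPosStrictMono M₀] {f g : α → M₀} {s : Set α}
    (hf : StrictAntiOn f s) (hg : AntitoneOn g s) (hf₀ : ∀ x ∈ s, 0 ≤ f x)
    (hg₀ : ∀ x ∈ s, 0 < g x) : StrictAntiOn (f * g) s :=
  fun _ ha _ hb hab ↦ mul_lt_mul (hf ha hb hab) (hg ha hb hab.le) (hg₀ _ hb) (hf₀ _ ha)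

theorem Filter.Tendsto.mul_antitoneOn_Ici {f g : ℝ → ℝ} {a : ℝ}
    (hf : Tendsto f atTop (nhds 0)) (hg : AntitoneOn g (Ici a)) (hg₀ : ∀ x ∈ Ici a, 0 ≤ g x) :
    Tendsto (f * g) atTop (nhds 0) := by
  refine hf.zero_mul_isBoundedUnder_le (isBoundedUnder_of_eventually_le (a := g a) ?_)
  filter_upwards [eventually_ge_atTop a] with x hx
  rw [Function.comp_apply, Real.norm_of_nonneg (hg₀ x hx)]
  exact hg self_mem_Ici hx hx

section

variable {a b c d k : ℝ}

theorem strictAntiOn_div_add_add (hc : 0 < c) (hab : 0 < a + b) :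
    StrictAntiOn (fun x : ℝ ↦ c / (a + x + b)) (Ici 0) := by
  intro x hx y _ hxy
  have : 0 < a + x + b := by linarith [mem_Ici.1 hx]
  dsimp only
  gcongr

theorem tendsto_div_add_add_atTop : Tendsto (fun x : ℝ ↦ c / (a + x + b)) atTop (nhds 0) :=
  tendsto_const_nhds.div_atTop <|
    tendsto_atTop_add_const_right _ b <| tendsto_atTop_add_const_left _ a tendsto_id

theorem antitoneOn_div_add_mul_add (hd : 0 ≤ d) (hk : 0 ≤ k) (hab : 0 < a + b) :
    AntitoneOn (fun x : ℝ ↦ d / (a + x * k + b)) (Ici 0) := by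
  intro x hx y _ hxy
  have : 0 < a + x * k + b := by nlinarith [mem_Ici.1 hx]
  dsimp only
  gcongr

theorem div_add_mul_add_nonneg (hd : 0 ≤ d) (hk : 0 ≤ k) (hab : 0 < a + b) {x : ℝ}
    (hx : 0 ≤ x) : 0 ≤ d / (a + x * k + b) :=
  div_nonneg hd (by nlinarith)

end

theorem gfun_strictAnti_and_limits_general
    (μ N0 p ζ ε RA RI : ℝ)
    (hμ : 0 < μ) (hp : 0 ≤ p) (hζ : 0 ≤ ζ) (hε : ε ∈ Set.Icc (0:ℝ) 1)
    (hN0pos : 0 < N0) (hRARI : 0 < RA + RI) :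
    StrictAntiOn (gfun μ N0 p ζ ε RA RI) (Set.Ici 0) ∧
      gfun μ N0 p ζ ε RA RI 0 =
        (μ * N0 / (p + μ)) * (1 + p * (1 - ε) / (ζ * ε + μ)) * (RA + RI) ∧
      Tendsto (gfun μ N0 p ζ ε RA RI) atTop (nhds 0) := by
  obtain ⟨hε0, hε1⟩ := hε
  have h1ε : 0 ≤ 1 - ε := sub_nonneg.2 hε1
  have hpμ : 0 < p + μ := by linarith
  have hζμ : 0 < ζ * ε + μ := by positivity
  set S : ℝ → ℝ := fun β ↦ μ * N0 / (p + β + μ)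
  set W : ℝ → ℝ := fun β ↦ 1 + p * (1 - ε) / (ζ * ε + β * (1 - ε) + μ)
  have hg : gfun μ N0 p ζ ε RA RI = S * W * fun _ ↦ RA + RI := rfl
  have hS₀ : ∀ β ∈ Ici (0 : ℝ), 0 ≤ S β := fun β hβ ↦
    div_nonneg (by positivity) (by linarith [mem_Ici.1 hβ])
  have hW : AntitoneOn W (Ici 0) :=
    (antitoneOn_div_add_mul_add (mul_nonneg hp h1ε) h1ε hζμ).const_add 1
  have hW₀ : ∀ β ∈ Ici (0 : ℝ), 0 < W β := fun β hβ ↦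
    add_pos_of_pos_of_nonneg one_pos (div_add_mul_add_nonneg (mul_nonneg hp h1ε) h1ε hζμ hβ)
  have hSW₀ : ∀ β ∈ Ici (0 : ℝ), 0 ≤ (S * W) β := fun β hβ ↦
    mul_nonneg (hS₀ β hβ) (hW₀ β hβ).le
  refine ⟨?_, by simp only [gfun, add_zero, zero_mul], ?_⟩
  · rw [hg]
    exact ((strictAntiOn_div_add_add (by positivity) hpμ).mul_antitoneOn hW hS₀ hW₀).mul_antitoneOn
      (antitoneOn_const (s := Ici 0)) hSW₀ fun _ _ ↦ hRARI
  · rw [hg]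
    exact (tendsto_div_add_add_atTop.mul_antitoneOn_Ici hW fun β hβ ↦ (hW₀ β hβ).le)
      |>.mul_antitoneOn_Ici (antitoneOn_const (s := Ici 0)) fun _ _ ↦ hRARI.le

/-- If `N0 > 0` and `R_A + R_I > 0`, then `g` is strictly
decreasing on `[0, ∞)`, `g(0) = R₀`, and `g(β) → 0` as `β → ∞`. -/
theorem gfun_strictAnti_and_limits
    (μ N0 p ζ ε RA RI : ℝ)
    (hμ : 0 < μ) (hN0 : 0 ≤ N0) (hp : 0 ≤ p) (hζ : 0 ≤ ζ) (hε : ε ∈ Set.Icc (0:ℝ) 1)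
    (hRA : 0 ≤ RA) (hRI : 0 ≤ RI)
    (hN0pos : 0 < N0) (hRARI : 0 < RA + RI) :
    StrictAntiOn (gfun μ N0 p ζ ε RA RI) (Set.Ici 0) ∧
      gfun μ N0 p ζ ε RA RI 0 =
        (μ * N0 / (p + μ)) * (1 + p * (1 - ε) / (ζ * ε + μ)) * (RA + RI) ∧
      Tendsto (gfun μ N0 p ζ ε RA RI) atTop (nhds 0) :=
  gfun_strictAnti_and_limits_general μ N0 p ζ ε RA RI hμ hp hζ hε hN0pos hRARI
end
end
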